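/- arXiv:1712.01139 — 3 statements merged into one kernel-verified Lean document; each statement's English description precedes it below -/
import Mathlib

section
/- Let G = (V, E) be a 2-vertex connected finite simple graph on at least 3 vertices with diameter D, and for each vertex u let P_u be a partition of the neighborhood Γ(u) of u into nonempty parts. Then the auxiliary graph G̃ associated with G and the partitions (P_u)_{u ∈ V} is connected and has diameter at most 3·D + 2; in particular, for any two vertices u, v that are adjacent in G, the distance between u and v in G̃ is at most 3. -/
open SimpleGraph

/-- A finite simple graph (on at least 3 vertices) is 2-vertex connected if it is connected
and deleting any single vertex leaves a connected graph. -/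
def TwoVertexConnected {V : Type} (G : SimpleGraph V) : Prop :=
  G.Connected ∧ ∀ u : V, (G.induce {v | v ≠ u}).Connected

/-- `Part` assigns to each vertex `u` a partition of the neighborhood `Γ(u)` of `u`
into nonempty parts. -/
def IsNbrPartition {V : Type} (G : SimpleGraph V) (Part : V → Set (Set V)) : Prop :=
  ∀ u : V,
    (∀ P ∈ Part u, P.Nonempty) ∧
    (⋃₀ Part u = G.neighborSet u) ∧
    (∀ P ∈ Part u, ∀ Q ∈ Part u, P ≠ Q → Disjoint P Q)

/-- The vertices of the auxiliary graph: the original vertices of `V` together with the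
virtual copies `(u, P)` for `u ∈ V` and `P ∈ Part u`. -/
def AuxVert {V : Type} (Part : V → Set (Set V)) : Type :=
  V ⊕ {p : V × Set V // p.2 ∈ Part p.1}

/-- The auxiliary graph associated with `G` and the neighborhood partitions `Part`:
each vertex `u` is joined to each of its virtual copies `(u, P)`, `P ∈ Part u`, and for
every edge `{u, v}` of `G` the virtual copies `(u, P)` and `(v, Q)` are joined, where
`P` is the part of `Part u` containing `v` and `Q` is the part of `Part v` containing `u`. -/
def auxGraph {V : Type} (G : SimpleGraph V) (Part : V → Set (Set V)) :
    SimpleGraph (AuxVert Part) where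
  Adj x y :=
    match x, y with
    | Sum.inl u, Sum.inr ⟨(u', _), _⟩ => u = u'
    | Sum.inr ⟨(u', _), _⟩, Sum.inl u => u = u'
    | Sum.inr ⟨(u, P), _⟩, Sum.inr ⟨(v, Q), _⟩ => G.Adj u v ∧ v ∈ P ∧ u ∈ Q
    | _, _ => False
  symm := by
    refine ⟨?_⟩
    rintro (u | ⟨⟨u, P⟩, hP⟩) (v | ⟨⟨v, Q⟩, hQ⟩) h
    · exact h.elim
    · exact h
    · exact h
    · exact ⟨h.1.symm, h.2.2, h.2.1⟩
  loopless := by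
    refine ⟨?_⟩
    rintro (u | ⟨⟨u, P⟩, hP⟩) h
    · exact h.elim
    · exact G.irrefl h.1

/-!
Every edge `uv` of `G` lifts to the path `u, (u, P), (v, Q), v` of length three in the
auxiliary graph, so distances between original vertices grow at most by a factor of three.
Every virtual vertex `(u, P)` is adjacent to its original vertex `u`, which costs at most one
extra step at each end.
-/

section AuxGraph

variable {V : Type} {G : SimpleGraph V} {Part : V → Set (Set V)}

lemma exists_auxGraph_walk_length_eq_three (hcover : ∀ u, G.neighborSet u ⊆ ⋃₀ Part u)
    {u v : V} (h : G.Adj u v) :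
    ∃ q : (auxGraph G Part).Walk (.inl u) (.inl v), q.length = 3 := by
  obtain ⟨P, hP, hvP⟩ := hcover u h
  obtain ⟨Q, hQ, huQ⟩ := hcover v h.symm
  have hu : (auxGraph G Part).Adj (.inl u) (.inr ⟨(u, P), hP⟩) := rfl
  have huv : (auxGraph G Part).Adj (.inr ⟨(u, P), hP⟩) (.inr ⟨(v, Q), hQ⟩) := ⟨h, hvP, huQ⟩
  have hv : (auxGraph G Part).Adj (.inr ⟨(v, Q), hQ⟩) (.inl v) := rfl
  exact ⟨.cons hu (.cons huv (.cons hv .nil)), rfl⟩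

lemma auxGraph_dist_inl_le_three (hcover : ∀ u, G.neighborSet u ⊆ ⋃₀ Part u)
    {u v : V} (h : G.Adj u v) :
    (auxGraph G Part).dist (.inl u) (.inl v) ≤ 3 := by
  obtain ⟨q, hq⟩ := exists_auxGraph_walk_length_eq_three hcover h
  exact hq ▸ dist_le q

lemma exists_auxGraph_adj_inl (x : AuxVert Part) :
    ∃ u : V, x = .inl u ∨ (auxGraph G Part).Adj x (.inl u) := by
  rcases x with u | ⟨⟨u, P⟩, hP⟩
  · exact ⟨u, .inl rfl⟩
  · exact ⟨u, .inr rfl⟩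

lemma auxGraph_reachable_inl (hcover : ∀ u, G.neighborSet u ⊆ ⋃₀ Part u) {u v : V}
    (p : G.Walk u v) : (auxGraph G Part).Reachable (.inl u) (.inl v) := by
  induction p with
  | nil => rfl
  | cons h _ ih =>
    obtain ⟨q, -⟩ := exists_auxGraph_walk_length_eq_three hcover h
    exact q.reachable.trans ih

lemma auxGraph_connected (hcover : ∀ u, G.neighborSet u ⊆ ⋃₀ Part u) (hG : G.Connected) :
    (auxGraph G Part).Connected := by
  have : Nonempty (AuxVert Part) := ⟨.inl hG.nonempty.some⟩
  have reachable_inl (x : AuxVert Part) : ∃ u : V, (auxGraph G Part).Reachable x (.inl u) := by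
    obtain ⟨u, rfl | hxu⟩ := exists_auxGraph_adj_inl (G := G) x
    exacts [⟨u, .rfl⟩, ⟨u, hxu.reachable⟩]
  refine ⟨fun x y => ?_⟩
  obtain ⟨a, hxa⟩ := reachable_inl x
  obtain ⟨b, hyb⟩ := reachable_inl y
  exact (hxa.trans (auxGraph_reachable_inl hcover (hG a b).some)).trans hyb.symm

lemma auxGraph_dist_inl_le_three_mul_length (hcover : ∀ u, G.neighborSet u ⊆ ⋃₀ Part u)
    (hconn : (auxGraph G Part).Connected) {u v : V} (p : G.Walk u v) :
    (auxGraph G Part).dist (.inl u) (.inl v) ≤ 3 * p.length := by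
  induction p with
  | nil => exact dist_self.le
  | @cons u w v h p ih =>
    calc (auxGraph G Part).dist (.inl u) (.inl v)
        ≤ (auxGraph G Part).dist (.inl u) (.inl w) + (auxGraph G Part).dist (.inl w) (.inl v) :=
          hconn.dist_triangle
      _ ≤ 3 + 3 * p.length := add_le_add (auxGraph_dist_inl_le_three hcover h) ih
      _ = 3 * (p.cons h).length := by rw [Walk.length_cons]; ring

lemma auxGraph_dist_le_three_mul_diam_add_two (hcover : ∀ u, G.neighborSet u ⊆ ⋃₀ Part u)
    (hG : G.Connected) (hdiam : G.ediam ≠ ⊤) (x y : AuxVert Part) :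
    (auxGraph G Part).dist x y ≤ 3 * G.diam + 2 := by
  have hconn := auxGraph_connected hcover hG
  have dist_inl_le_one (x : AuxVert Part) : ∃ u : V, (auxGraph G Part).dist x (.inl u) ≤ 1 := by
    obtain ⟨u, rfl | hxu⟩ := exists_auxGraph_adj_inl (G := G) x
    exacts [⟨u, dist_self.trans_le zero_le_one⟩, ⟨u, (dist_eq_one_iff_adj.mpr hxu).le⟩]
  obtain ⟨a, hxa⟩ := dist_inl_le_one x
  obtain ⟨b, hyb⟩ := dist_inl_le_one y
  obtain ⟨p, hp⟩ := (hG a b).exists_walk_length_eq_dist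
  have hab : (auxGraph G Part).dist (.inl a) (.inl b) ≤ 3 * G.diam :=
    calc (auxGraph G Part).dist (.inl a) (.inl b) ≤ 3 * p.length :=
          auxGraph_dist_inl_le_three_mul_length hcover hconn p
      _ ≤ 3 * G.diam := by rw [hp]; exact Nat.mul_le_mul_left 3 (dist_le_diam hdiam)
  calc (auxGraph G Part).dist x y
      ≤ (auxGraph G Part).dist x (.inl a) +
          ((auxGraph G Part).dist (.inl a) (.inl b) + (auxGraph G Part).dist (.inl b) y) :=
        hconn.dist_triangle.trans (Nat.add_le_add_left hconn.dist_triangle _)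
    _ ≤ 3 * G.diam + 2 := by
        have hby : (auxGraph G Part).dist (.inl b) y ≤ 1 := dist_comm.trans_le hyb
        omega

end AuxGraph

theorem auxGraph_diam_general {V : Type} [Fintype V] (G : SimpleGraph V) (D : ℕ)
    (hG : TwoVertexConnected G) (hD : G.diam = D)
    (Part : V → Set (Set V)) (hPart : IsNbrPartition G Part) :
    (auxGraph G Part).Connected ∧
      (auxGraph G Part).diam ≤ 3 * D + 2 ∧
      (∀ u v : V, G.Adj u v →
        (auxGraph G Part).dist (Sum.inl u) (Sum.inl v) ≤ 3) := by
  have hcover : ∀ u, G.neighborSet u ⊆ ⋃₀ Part u := fun u => (hPart u).2.1.ge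
  have hconn := auxGraph_connected hcover hG.1
  have : Nonempty V := hG.1.nonempty
  have hdiam : G.ediam ≠ ⊤ := connected_iff_ediam_ne_top.mp hG.1
  refine ⟨hconn, ?_, fun u v huv => auxGraph_dist_inl_le_three hcover huv⟩
  have : Nonempty (AuxVert Part) := hconn.nonempty
  obtain ⟨x, y, hxy⟩ := (auxGraph G Part).exists_dist_eq_diam
  rw [← hxy, ← hD]
  exact auxGraph_dist_le_three_mul_diam_add_two hcover hG.1 hdiam x y

/-- The auxiliary graph of a 2-vertex connected graph of diameter `D` (with neighborhood
partitions into nonempty parts) is connected and has diameter at most `3·D + 2`; in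
particular, vertices adjacent in `G` are at distance at most `3` in the auxiliary graph. -/
theorem auxGraph_diam {V : Type} [Fintype V] (G : SimpleGraph V) (D : ℕ)
    (hcard : 3 ≤ Fintype.card V) (hG : TwoVertexConnected G) (hD : G.diam = D)
    (Part : V → Set (Set V)) (hPart : IsNbrPartition G Part) :
    (auxGraph G Part).Connected ∧
      (auxGraph G Part).diam ≤ 3 * D + 2 ∧
      (∀ u v : V, G.Adj u v →
        (auxGraph G Part).dist (Sum.inl u) (Sum.inl v) ≤ 3) :=
  auxGraph_diam_general G D hG hD Part hPart
end

section
/- For all integers Δ ≥ 2 and D ≥ 1 with Δ · D ≥ 3, there exists a 2-vertex connected finite simple graph G with diameter at most D + 2 containing a vertex u of degree exactly Δ, such that the graph G ∖ {u} is connected and has diameter at least Δ·D/2 − 1. (Consequently, in any private neighborhood trees collection for G, the tree T(u) must have diameter at least Δ·D/2 − 1, so the O(Δ·D) dilation bound for private neighborhood trees is existentially tight up to logarithmic factors.) -/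
/-!
Take the cycle on `ℤ/ΔD` and join a hub `u` to the multiples of `D`. Every cycle vertex is within
`⌊D/2⌋` steps of a spoke, so any two vertices are joined through `u` by a walk of length at most
`D + 2`. Deleting a cycle vertex leaves a path which still meets `u` through another spoke, so the
graph is 2-connected. Deleting `u` leaves the bare cycle, whose diameter is `⌊ΔD/2⌋`: a walk on it
lifts step by step to a walk on `ℤ` of the same length, and the lift of a walk from `0` to `⌊ΔD/2⌋`
ends at an integer congruent to `⌊ΔD/2⌋` modulo `ΔD`, hence at distance at least `⌊ΔD/2⌋` from `0`.
-/

open SimpleGraph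

theorem SimpleGraph.Walk.exists_intCast_eq_sub_abs_le_length {V A : Type*} [AddGroupWithOne A]
    {G : SimpleGraph V} (f : V → A) (hf : ∀ a b, G.Adj a b → f b - f a = 1 ∨ f a - f b = 1)
    {u v : V} (w : G.Walk u v) : ∃ x : ℤ, (x : A) = f v - f u ∧ |x| ≤ w.length := by
  induction w with
  | nil => exact ⟨0, by simp, by simp⟩
  | @cons a b c hab p ih =>
    obtain ⟨x, hx, hlen⟩ := ih
    rw [Walk.length_cons, Nat.cast_succ]
    rcases hf a b hab with h | h
    · refine ⟨x + 1, by push_cast; rw [hx, ← h, sub_add_sub_cancel], ?_⟩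
      exact (abs_add_le x 1).trans (by simpa using hlen)
    · refine ⟨x - 1, by push_cast; rw [hx, ← h, sub_sub_sub_cancel_right], ?_⟩
      exact (abs_sub x 1).trans (by simpa using hlen)

namespace ZMod

theorem half_le_abs_of_intCast_eq {n : ℕ} {x : ℤ} (hx : (x : ZMod n) = ((n / 2 : ℕ) : ZMod n)) :
    ((n / 2 : ℕ) : ℤ) ≤ |x| := by
  rw [← Int.cast_natCast, intCast_eq_intCast_iff_dvd_sub] at hx
  obtain ⟨k, hk⟩ := hx
  have hn_le : (n : ℤ) ≤ 2 * ((n / 2 : ℕ) : ℤ) + 1 := by omega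
  have hn_ge : 2 * ((n / 2 : ℕ) : ℤ) ≤ n := by omega
  rcases lt_trichotomy k 0 with hk0 | rfl | hk0
  · exact le_abs.mpr (Or.inl (by nlinarith))
  · exact le_abs.mpr (Or.inl (by omega))
  · exact le_abs.mpr (Or.inr (by nlinarith))

variable {n : ℕ} [NeZero n]

theorem ncard_setOf_dvd_val {D : ℕ} (hD : 0 < D) (hDn : D ∣ n) :
    {j : ZMod n | D ∣ j.val}.ncard = n / D := by
  have hlt (k : Fin (n / D)) : D * k < n := by
    have := k.isLt
    rw [Nat.lt_div_iff_mul_lt' hDn] at this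
    linarith
  have hval (k : Fin (n / D)) : ((D * k : ℕ) : ZMod n).val = D * k := val_cast_of_lt (hlt k)
  have hrange :
      {j : ZMod n | D ∣ j.val} = Set.range fun k : Fin (n / D) => ((D * k : ℕ) : ZMod n) := by
    ext j
    constructor
    · rintro ⟨q, hq⟩
      have hq_lt : q < n / D := by
        rw [Nat.lt_div_iff_mul_lt' hDn]
        linarith [j.val_lt]
      refine ⟨⟨q, hq_lt⟩, ?_⟩
      show ((D * q : ℕ) : ZMod n) = j
      rw [← hq, natCast_zmod_val]
    · rintro ⟨k, rfl⟩
      exact ⟨k, hval k⟩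
  rw [hrange, Set.ncard_range_of_injective, Nat.card_eq_fintype_card, Fintype.card_fin]
  intro k l hkl
  have := congrArg val hkl
  rw [hval, hval] at this
  exact Fin.ext (Nat.eq_of_mul_eq_mul_left hD this)

theorem exists_near_dvd_val {D : ℕ} (hD : 0 < D) (hDn : D ∣ n) (j : ZMod n) :
    ∃ s : ZMod n, D ∣ s.val ∧ ∃ a ≤ D / 2, j = s + a ∨ s = j + a := by
  have hj := Nat.div_add_mod j.val D
  have hr := Nat.mod_lt j.val hD
  have hmul (q : ℕ) : D ∣ ((D * q : ℕ) : ZMod n).val := by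
    rw [val_natCast]
    exact (Nat.dvd_mod_iff hDn).mpr (dvd_mul_right D q)
  by_cases hlow : j.val % D ≤ D / 2
  · refine ⟨_, hmul (j.val / D), j.val % D, hlow, Or.inl ?_⟩
    rw [← Nat.cast_add, hj, natCast_zmod_val]
  · refine ⟨_, hmul (j.val / D + 1), D - j.val % D, by omega, Or.inr ?_⟩
    have hq : D * (j.val / D + 1) = j.val + (D - j.val % D) := by rw [Nat.mul_add_one]; omega
    rw [hq, Nat.cast_add, natCast_zmod_val]

theorem exists_eq_add_one_add_of_ne {i j : ZMod n} (h : j ≠ i) : ∃ k < n - 1, j = i + 1 + k := by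
  have hpos : 0 < (j - i).val := by
    rw [Nat.pos_iff_ne_zero, ne_eq, val_eq_zero, sub_eq_zero]
    exact h
  refine ⟨(j - i).val - 1, by have := (j - i).val_lt; omega, ?_⟩
  rw [Nat.cast_sub hpos, natCast_zmod_val]
  ring

end ZMod

/-- The cycle on `ZMod n` (vertices `some i`) together with a hub `none` joined to every vertex
whose representative in `[0, n)` is a multiple of `D`. -/
def sparseWheel (n D : ℕ) : SimpleGraph (Option (ZMod n)) :=
  SimpleGraph.fromRel fun v w => match v, w with
    | some i, some j => j = i + 1
    | none, some j => D ∣ j.val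
    | _, none => False

namespace sparseWheel

variable {n D : ℕ}

@[simp] theorem adj_some_some {i j : ZMod n} :
    (sparseWheel n D).Adj (some i) (some j) ↔ i ≠ j ∧ (j = i + 1 ∨ i = j + 1) := by
  simp [sparseWheel]

@[simp] theorem adj_none_some {j : ZMod n} : (sparseWheel n D).Adj none (some j) ↔ D ∣ j.val := by
  simp [sparseWheel]

@[simp] theorem adj_some_none {j : ZMod n} : (sparseWheel n D).Adj (some j) none ↔ D ∣ j.val := by
  simp [sparseWheel]

theorem ncard_neighborSet_none [NeZero n] (hD : 0 < D) (hDn : D ∣ n) :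
    ((sparseWheel n D).neighborSet none).ncard = n / D := by
  have hnbr : (sparseWheel n D).neighborSet none = some '' {j | D ∣ j.val} := by
    ext (_ | j) <;> simp
  rw [hnbr, Set.ncard_image_of_injective _ (Option.some_injective _),
    ZMod.ncard_setOf_dvd_val hD hDn]

variable [Fact (1 < n)]

theorem adj_some_add_one (i : ZMod n) : (sparseWheel n D).Adj (some i) (some (i + 1)) := by
  simp

theorem edist_some_add_le (i : ZMod n) (m : ℕ) :
    (sparseWheel n D).edist (some i) (some (i + m)) ≤ m := by
  induction m with
  | zero => simp
  | succ m ih =>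
    calc (sparseWheel n D).edist (some i) (some (i + ↑(m + 1)))
        ≤ (sparseWheel n D).edist (some i) (some (i + m)) +
            (sparseWheel n D).edist (some (i + m)) (some (i + m + 1)) := by
          rw [Nat.cast_succ, ← add_assoc]
          exact SimpleGraph.edist_triangle
      _ ≤ m + 1 := by rw [edist_eq_one_iff_adj.mpr (adj_some_add_one _)]; gcongr
      _ = ↑(m + 1) := by push_cast; rfl

theorem edist_none_le (hD : 0 < D) (hDn : D ∣ n) (j : ZMod n) :
    (sparseWheel n D).edist (some j) none ≤ (D / 2 + 1 : ℕ) := by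
  obtain ⟨s, hs, a, ha, hjs⟩ := ZMod.exists_near_dvd_val hD hDn j
  have hdist : (sparseWheel n D).edist (some j) (some s) ≤ a := by
    rcases hjs with rfl | rfl
    · rw [edist_comm]
      exact edist_some_add_le s a
    · exact edist_some_add_le j a
  calc (sparseWheel n D).edist (some j) none
      ≤ (sparseWheel n D).edist (some j) (some s) + (sparseWheel n D).edist (some s) none :=
        SimpleGraph.edist_triangle
    _ ≤ a + 1 := by rw [edist_eq_one_iff_adj.mpr (adj_some_none.mpr hs)]; gcongr
    _ ≤ (D / 2 + 1 : ℕ) := by norm_cast; omega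

theorem ediam_le (hD : 0 < D) (hDn : D ∣ n) : (sparseWheel n D).ediam ≤ (D + 2 : ℕ) := by
  have hecc : (sparseWheel n D).eccent none ≤ (D / 2 + 1 : ℕ) := by
    rw [eccent_le_iff]
    rintro (_ | j)
    · simp
    · rw [edist_comm]
      exact edist_none_le hD hDn j
  calc (sparseWheel n D).ediam ≤ 2 * (sparseWheel n D).eccent none := ediam_le_two_mul_eccent _
    _ ≤ 2 * (D / 2 + 1 : ℕ) := by gcongr
    _ ≤ (D + 2 : ℕ) := by norm_cast; omega

variable (D) in
def arc (s : Set (Option (ZMod n))) (a : ZMod n) (L : ℕ) (hs : ∀ k < L, some (a + k) ∈ s) :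
    pathGraph L →g (sparseWheel n D).induce s where
  toFun k := ⟨some (a + k.val), hs k k.isLt⟩
  map_rel' {k l} hkl := by
    rcases pathGraph_adj.mp hkl with h | h <;> simp [← h, add_assoc]

theorem induce_ne_none_connected : ((sparseWheel n D).induce {v | v ≠ none}).Connected := by
  have hsurj : Function.Surjective
      (arc D {v : Option (ZMod n) | v ≠ none} 0 n fun _ _ => Option.some_ne_none _) := by
    rintro ⟨_ | j, hj⟩
    · exact absurd rfl hj
    · exact ⟨⟨j.val, j.val_lt⟩, Subtype.ext (by simp [arc])⟩
  exact Connected.map _ hsurj ⟨pathGraph_preconnected n⟩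

theorem induce_ne_some_connected (hD : 0 < D) (hDlt : D < n) (i : ZMod n) :
    ((sparseWheel n D).induce {v | v ≠ some i}).Connected := by
  have hs : ∀ k < n - 1, some (i + 1 + k) ∈ {v | v ≠ some i} := by
    intro k hk hki
    have h0 : ((k + 1 : ℕ) : ZMod n) = 0 := by
      push_cast
      linear_combination Option.some_injective _ hki
    rw [ZMod.natCast_eq_zero_iff] at h0
    exact Nat.not_dvd_of_pos_of_lt (by omega) (by omega) h0
  set f := arc D {v | v ≠ some i} (i + 1) (n - 1) hs
  have hf (j : ZMod n) (hj : some j ≠ some i) : ∃ k, f k = ⟨some j, hj⟩ := by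
    obtain ⟨k, hk, rfl⟩ := ZMod.exists_eq_add_one_add_of_ne fun h => hj (congrArg some h)
    exact ⟨⟨k, hk⟩, rfl⟩
  obtain ⟨s, hsi, hspoke⟩ : ∃ s : ZMod n, some s ≠ some i ∧ D ∣ s.val := by
    by_cases hi : i = 0
    · refine ⟨D, ?_, by rw [ZMod.val_cast_of_lt hDlt]⟩
      rw [hi, ne_eq, Option.some.injEq, ZMod.natCast_eq_zero_iff]
      exact Nat.not_dvd_of_pos_of_lt hD hDlt
    · exact ⟨0, by simpa [eq_comm] using hi, by simp⟩
  obtain ⟨l, hl⟩ := hf s hsi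
  rw [connected_iff_exists_forall_reachable]
  refine ⟨⟨none, by simp⟩, ?_⟩
  rintro ⟨_ | j, hj⟩
  · rfl
  · obtain ⟨k, hk⟩ := hf j hj
    have hhub : ((sparseWheel n D).induce {v | v ≠ some i}).Adj ⟨none, by simp⟩ (f l) := by
      rw [hl]
      exact adj_none_some.mpr hspoke
    exact hhub.reachable.trans (hk ▸ (pathGraph_preconnected _ l k).map f)

theorem half_le_diam_induce_ne_none :
    n / 2 ≤ ((sparseWheel n D).induce {v | v ≠ none}).diam := by
  set H := (sparseWheel n D).induce {v | v ≠ none}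
  have hconn : H.Connected := induce_ne_none_connected
  have : Nonempty {v : Option (ZMod n) | v ≠ none} := hconn.nonempty
  obtain ⟨w, hw⟩ := (hconn.preconnected ⟨some 0, by simp⟩
    ⟨some (n / 2 : ℕ), by simp⟩).exists_walk_length_eq_dist
  obtain ⟨x, hx, hlen⟩ := w.exists_intCast_eq_sub_abs_le_length (fun v => v.1.getD 0) (by
    rintro ⟨_ | a, ha⟩ ⟨_ | b, hb⟩ hab
    · exact absurd rfl ha
    · exact absurd rfl ha
    · exact absurd rfl hb
    · rcases ((adj_some_some (D := D)).mp hab).2 with rfl | rfl <;> simp)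
  have hhalf := ZMod.half_le_abs_of_intCast_eq (by simpa using hx)
  calc n / 2 ≤ H.dist _ _ := by rw [← hw]; exact_mod_cast hhalf.trans hlen
    _ ≤ H.diam := dist_le_diam (connected_iff_ediam_ne_top.mp hconn)

end sparseWheel

/-- For all `Δ ≥ 2` and `D ≥ 1` with `Δ·D ≥ 3` there is a 2-vertex connected graph of
diameter at most `D + 2` with a vertex `u` of degree `Δ` such that `G \ {u}` is connected
of diameter at least `Δ·D/2 − 1`: the `O(Δ·D)` dilation bound for private neighborhood
trees is existentially tight up to logarithmic factors. -/
theorem private_trees_dilation_lower_bound (Δ D : ℕ) (hΔ : 2 ≤ Δ) (hD : 1 ≤ D)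
    (hΔD : 3 ≤ Δ * D) :
    ∃ (V : Type) (_ : Fintype V) (G : SimpleGraph V) (u : V),
      3 ≤ Fintype.card V ∧
      TwoVertexConnected G ∧
      G.diam ≤ D + 2 ∧
      (G.neighborSet u).ncard = Δ ∧
      (G.induce {v | v ≠ u}).Connected ∧
      ((Δ * D : ℝ) / 2 - 1 ≤ ((G.induce {v | v ≠ u}).diam : ℝ)) := by
  have : Fact (1 < Δ * D) := ⟨by omega⟩
  have hDn : D ∣ Δ * D := dvd_mul_left D Δ
  have hDlt : D < Δ * D := by nlinarith
  have hediam := sparseWheel.ediam_le hD hDn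
  refine ⟨Option (ZMod (Δ * D)), inferInstance, sparseWheel (Δ * D) D, none,
    ?_, ⟨?_, ?_⟩, ?_, ?_, sparseWheel.induce_ne_none_connected, ?_⟩
  · rw [Fintype.card_option, ZMod.card]
    omega
  · exact connected_of_ediam_ne_top (ne_top_of_le_ne_top (ENat.natCast_ne_top _) hediam)
  · rintro (_ | i)
    · exact sparseWheel.induce_ne_none_connected
    · exact sparseWheel.induce_ne_some_connected hD hDlt i
  · exact ENat.toNat_le_of_le_natCast hediam
  · rw [sparseWheel.ncard_neighborSet_none hD hDn, Nat.mul_div_cancel _ hD]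
  · have hhalf : ((Δ * D / 2 : ℕ) : ℝ) ≤
        (((sparseWheel (Δ * D) D).induce {v | v ≠ none}).diam : ℝ) :=
      Nat.cast_le.mpr sparseWheel.half_le_diam_induce_ne_none
    have hfloor : ((Δ * D : ℕ) : ℝ) ≤ 2 * ((Δ * D / 2 : ℕ) : ℝ) + 1 := by
      exact_mod_cast (by omega : Δ * D ≤ 2 * (Δ * D / 2) + 1)
    push_cast at hfloor
    linarith
end

section
/- For every integer k ≥ 1, all nonempty finite types X, M₀, and every function f : (Fin k → X) → Y into a finite type Y, there exist a nonempty finite type R (the shared randomness), a finite type M (the message alphabet), encoding functions Enc : Fin k → X → R → M, and a decoding function Dec : (Fin k → M) → Y, such that: (correctness) for every input x : Fin k → X and every r : R, Dec (fun i => Enc i (x i) r) = f x; and (perfect privacy) there exists a simulator Sim : Y → PMF (Fin k → M) such that for every input x : Fin k → X, the pushforward of the uniform probability distribution on R under the map r ↦ (fun i => Enc i (x i) r) is equal, as a probability distribution on Fin k → M, to Sim (f x). -/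
open Function

lemma psm_map_uniform_of_inj {R W : Type} [Fintype R] [Nonempty R] [DecidableEq W]
    (T : R → W) (hinj : Function.Injective T) (S : Finset W)
    (hS : Set.range T = ↑S) (hne : S.Nonempty) :
    (PMF.uniformOfFintype R).map T = PMF.uniformOfFinset S hne := by
  have hSim : S = Finset.univ.image T := by
    apply Finset.coe_injective
    rw [Finset.coe_image, Finset.coe_univ, Set.image_univ, hS]
  have hcard : S.card = Fintype.card R := by
    rw [hSim, Finset.card_image_of_injective _ hinj, Finset.card_univ]
  ext w
  rw [PMF.map_apply, PMF.uniformOfFinset_apply]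
  by_cases hw : w ∈ S
  · have hwr : w ∈ Set.range T := by rw [hS]; exact hw
    obtain ⟨r₀, hr₀⟩ := hwr
    rw [tsum_eq_single r₀ (by
      intro r hr
      rw [if_neg]
      intro he
      exact hr (hinj (hr₀.trans he)).symm), if_pos hr₀.symm, if_pos hw,
      PMF.uniformOfFintype_apply, hcard]
  · rw [if_neg hw]
    refine (tsum_congr fun r => ?_).trans tsum_zero
    rw [if_neg]
    intro he
    apply hw
    have hrg : w ∈ Set.range T := ⟨r, he.symm⟩
    rw [hS] at hrg
    exact hrg

/-- Core inductive PSM construction over `ZMod` input/output alphabets: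
an injective encoding whose range depends only on the output value. -/
lemma psm_core (n m : ℕ) [NeZero n] [NeZero m] :
    ∀ k : ℕ, 1 ≤ k →
    ∃ (R : Type) (_ : Fintype R) (_ : Nonempty R) (M : Type) (_ : Fintype M)
      (_ : Nonempty M) (S : ZMod m → Set (Fin k → M)) (Dec : (Fin k → M) → ZMod m),
      ∀ F : (Fin k → ZMod n) → ZMod m,
        ∃ Enc : Fin k → ZMod n → R → M,
          (∀ (x : Fin k → ZMod n) (r : R), Dec (fun i => Enc i (x i) r) = F x) ∧
          (∀ x : Fin k → ZMod n, Function.Injective fun r => (fun i => Enc i (x i) r)) ∧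
          (∀ x : Fin k → ZMod n,
            Set.range (fun r => (fun i => Enc i (x i) r)) = S (F x)) := by
  refine Nat.le_induction ?_ ?_
  · -- base case k = 1
    refine ⟨PUnit, inferInstance, inferInstance, ZMod m, inferInstance, inferInstance,
      fun y => {fun _ => y}, fun w => w 0, ?_⟩
    intro F
    refine ⟨fun _ x0 _ => F (fun _ => x0), ?_, ?_, ?_⟩
    · intro x r
      exact congrArg F (funext fun j => by rw [Subsingleton.elim j 0])
    · intro x a b _
      exact Subsingleton.elim a b
    · intro x
      have hT : (fun (_ : PUnit) => (fun i : Fin 1 => F (fun _ => x i)))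
          = fun _ => (fun _ : Fin 1 => F x) := by
        funext r i
        exact congrArg F (funext fun j => by rw [Subsingleton.elim j i])
      show Set.range (fun (_ : PUnit) => (fun i : Fin 1 => F (fun _ => x i))) = _
      rw [hT, Set.range_const]
  · -- inductive step k → k+1
    rintro k hk ⟨R', fR', nR', M', fM', nM', S', Dec', hIH⟩
    choose Enc' h1 h2 h3 using hIH
    have dM' : M' := Classical.arbitrary M'
    classical
    refine ⟨(Fin k → ZMod n) × ((Fin k → ZMod n) → ZMod m) × R', inferInstance,
      inferInstance, ((Fin k → ZMod n) → ZMod m) × ZMod n × M',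
      inferInstance, inferInstance,
      fun y => {w | (w 0).2.1 = 0 ∧ (w 0).2.2 = dM' ∧
        (∀ i : Fin k, (w i.succ).1 = (fun _ => 0)) ∧
        (fun i => (w i.succ).2.2) ∈ S' ((w 0).1 (fun i => (w i.succ).2.1) - y)},
      fun w => (w 0).1 (fun i => (w i.succ).2.1) - Dec' (fun i => (w i.succ).2.2), ?_⟩
    intro F
    set g : (Fin k → ZMod n) → ((Fin k → ZMod n) → ZMod m) →
        (Fin k → ZMod n) → ZMod m := fun t s v => s (fun i => v i + t i) with hg
    set Enc : Fin (k+1) → ZMod n → ((Fin k → ZMod n) × ((Fin k → ZMod n) → ZMod m) × R') →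
        (((Fin k → ZMod n) → ZMod m) × ZMod n × M') :=
      fun i => Fin.cases
        (motive := fun _ => ZMod n → ((Fin k → ZMod n) × ((Fin k → ZMod n) → ZMod m) × R') →
          (((Fin k → ZMod n) → ZMod m) × ZMod n × M'))
        (fun x0 r => ((fun u => F (Fin.cons x0 (fun j => u j - r.1 j)) + r.2.1 u),
          (0 : ZMod n), dM'))
        (fun i' xi r => ((fun _ => 0), xi + r.1 i',
          Enc' (g r.1 r.2.1) i' xi r.2.2)) i with hEnc
    have hE0 : ∀ x0 r, Enc 0 x0 r =
        ((fun u => F (Fin.cons x0 (fun j => u j - r.1 j)) + r.2.1 u),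
          (0 : ZMod n), dM') := fun _ _ => rfl
    have hEs : ∀ (i : Fin k) xi r, Enc i.succ xi r =
        ((fun _ => 0), xi + r.1 i, Enc' (g r.1 r.2.1) i xi r.2.2) := by
      intro i xi r
      simp only [hEnc, Fin.cases_succ]
    have htail : ∀ x : Fin (k+1) → ZMod n,
        Fin.cons (x 0) (fun i : Fin k => x i.succ) = x := fun x => Fin.cons_self_tail x
    refine ⟨Enc, ?_, ?_, ?_⟩
    · -- correctness
      rintro x ⟨t, s, r'⟩
      show (Enc 0 (x 0) (t,s,r')).1 (fun i => (Enc i.succ (x i.succ) (t,s,r')).2.1)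
          - Dec' (fun i => (Enc i.succ (x i.succ) (t,s,r')).2.2) = F x
      simp only [hE0, hEs]
      have hDec' : (Dec' fun i => Enc' (g t s) i (x i.succ) r') = g t s (fun i => x i.succ) :=
        h1 (g t s) (fun i => x i.succ) r'
      rw [hDec']
      have hgx : g t s (fun i => x i.succ) = s (fun i => x i.succ + t i) := rfl
      rw [hgx]
      have hx : (fun j : Fin k => (fun i => x i.succ + t i) j - t j) = fun j => x j.succ := by
        funext j; simp
      show F (Fin.cons (x 0) (fun j => (fun i => x i.succ + t i) j - t j))
          + s (fun i => x i.succ + t i) - s (fun i => x i.succ + t i) = F x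
      rw [hx, htail x]
      ring
    · -- injectivity
      rintro x ⟨t1, s1, r1⟩ ⟨t2, s2, r2⟩ he
      have he' : ∀ i : Fin (k+1), Enc i (x i) (t1,s1,r1) = Enc i (x i) (t2,s2,r2) :=
        fun i => congrFun he i
      have het : ∀ i : Fin k, x i.succ + t1 i = x i.succ + t2 i := by
        intro i
        have h := he' i.succ
        rw [hEs, hEs] at h
        exact congrArg (fun p => p.2.1) h
      have ht : t1 = t2 := funext fun i => add_left_cancel (het i)
      subst ht
      have heA : (fun u => F (Fin.cons (x 0) (fun j => u j - t1 j)) + s1 u)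
          = (fun u => F (Fin.cons (x 0) (fun j => u j - t1 j)) + s2 u) := by
        have h := he' 0
        rw [hE0, hE0] at h
        exact congrArg (fun p => p.1) h
      have hs : s1 = s2 := by
        funext u
        exact add_left_cancel (congrFun heA u)
      subst hs
      have hem : (fun i => Enc' (g t1 s1) i ((fun i' : Fin k => x i'.succ) i) r1)
          = (fun i => Enc' (g t1 s1) i ((fun i' : Fin k => x i'.succ) i) r2) := by
        funext i
        have h := he' i.succ
        rw [hEs, hEs] at h
        exact congrArg (fun p => p.2.2) h
      have hr : r1 = r2 := h2 (g t1 s1) (fun i' => x i'.succ) hem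
      rw [hr]
    · -- range
      intro x
      ext w
      constructor
      · rintro ⟨⟨t, s, r'⟩, hw⟩
        have hw0 : w 0 = ((fun u => F (Fin.cons (x 0) (fun j => u j - t j)) + s u),
            (0 : ZMod n), dM') :=
          (congrFun hw 0).symm.trans (hE0 (x 0) (t,s,r'))
        have hws : ∀ i : Fin k, w i.succ =
            ((fun _ => 0), x i.succ + t i, Enc' (g t s) i (x i.succ) r') :=
          fun i => (congrFun hw i.succ).symm.trans (hEs i (x i.succ) (t,s,r'))
        refine ⟨by rw [hw0], by rw [hw0], fun i => by rw [hws i], ?_⟩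
        have hmem : (fun i => (w i.succ).2.2) ∈ S' (g t s (fun i => x i.succ)) := by
          rw [← h3 (g t s) (fun i => x i.succ)]
          exact ⟨r', by funext i; rw [hws i]⟩
        have hval : (w 0).1 (fun i => (w i.succ).2.1) - F x = g t s (fun i => x i.succ) := by
          have hj : (fun i : Fin k => (w i.succ).2.1) = fun i => x i.succ + t i := by
            funext i; rw [hws i]
          rw [hw0, hj]
          show F (Fin.cons (x 0) (fun j => (fun i => x i.succ + t i) j - t j))
              + s (fun i => x i.succ + t i) - F x = s (fun i => x i.succ + t i)
          have hxx : (fun j : Fin k => (fun i => x i.succ + t i) j - t j)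
              = fun j => x j.succ := by
            funext j; simp
          rw [hxx, htail x]
          ring
        rw [hval]
        exact hmem
      · rintro ⟨hc1, hc2, hc3, hc4⟩
        set t : Fin k → ZMod n := fun i => (w i.succ).2.1 - x i.succ with hdt
        set s : (Fin k → ZMod n) → ZMod m :=
          fun u => (w 0).1 u - F (Fin.cons (x 0) (fun i => u i - t i)) with hds
        have hjt : (fun i => x i.succ + t i) = fun i : Fin k => (w i.succ).2.1 := by
          funext i; simp [hdt]
        have hgx : g t s (fun i => x i.succ)
            = (w 0).1 (fun i => (w i.succ).2.1) - F x := by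
          show s (fun i => x i.succ + t i) = _
          rw [hjt]
          show (w 0).1 (fun i => (w i.succ).2.1)
              - F (Fin.cons (x 0) (fun i => (fun i' : Fin k => (w i'.succ).2.1) i - t i)) = _
          have hxx : (fun i : Fin k => (fun i' : Fin k => (w i'.succ).2.1) i - t i)
              = fun i => x i.succ := by
            funext i; simp [hdt]
          rw [hxx, htail x]
        have hmem : (fun i => (w i.succ).2.2) ∈ Set.range
            (fun r => (fun i => Enc' (g t s) i ((fun i' : Fin k => x i'.succ) i) r)) := by
          rw [h3 (g t s) (fun i' => x i'.succ), hgx]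
          exact hc4
        obtain ⟨r', hr'⟩ := hmem
        refine ⟨⟨t, s, r'⟩, ?_⟩
        show (fun i => Enc i (x i) (t,s,r')) = w
        funext i
        refine Fin.cases ?_ ?_ i
        · rw [hE0]
          have hA : (fun u => F (Fin.cons (x 0) (fun j' => u j' - t j')) + s u) = (w 0).1 := by
            funext u
            simp only [hds]
            ring
          have hsplit : w 0 = ((w 0).1, (w 0).2.1, (w 0).2.2) := rfl
          rw [hsplit, hA, hc1, hc2]
        · intro i'
          have hv : x i'.succ + t i' = (w i'.succ).2.1 := congrFun hjt i'
          have hm' : Enc' (g t s) i' (x i'.succ) r' = (w i'.succ).2.2 :=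
            congrFun hr' i'
          have hsplit : w i'.succ = ((w i'.succ).1, (w i'.succ).2.1, (w i'.succ).2.2) := rfl
          rw [hEs, hsplit, hc3 i', ← hv, ← hm']


/-- Feasibility of the Private Simultaneous Messages (PSM) model: for every function
`f : (Fin k → X) → Y` on finite types there are a finite nonempty shared-randomness type
`R`, a finite message alphabet `M`, per-client encodings `Enc` and a decoding `Dec` such
that decoding the messages always yields `f x` (correctness), and the joint distribution
of the messages under uniformly random shared randomness depends only on the output value
`f x`, as witnessed by a simulator (perfect privacy). -/
theorem psm_feasibility
    (k : ℕ) (hk : 1 ≤ k)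
    (X M₀ Y : Type) [Fintype X] [Nonempty X] [Fintype M₀] [Nonempty M₀] [Fintype Y]
    (f : (Fin k → X) → Y) :
    ∃ (R : Type) (instR : Fintype R) (hR : Nonempty R)
      (M : Type) (_ : Fintype M)
      (Enc : Fin k → X → R → M) (Dec : (Fin k → M) → Y),
      (∀ (x : Fin k → X) (r : R), Dec (fun i => Enc i (x i) r) = f x) ∧
      ∃ Sim : Y → PMF (Fin k → M),
        ∀ x : Fin k → X,
          (@PMF.uniformOfFintype R instR hR).map (fun r => fun i => Enc i (x i) r) =
            Sim (f x) := by
  classical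
  haveI hY : Nonempty Y := ⟨f (fun _ => Classical.arbitrary X)⟩
  obtain ⟨p, hp⟩ : ∃ p, Fintype.card X = p + 1 :=
    Nat.exists_eq_succ_of_ne_zero Fintype.card_ne_zero
  obtain ⟨q, hq⟩ : ∃ q, Fintype.card Y = q + 1 :=
    Nat.exists_eq_succ_of_ne_zero Fintype.card_ne_zero
  let eX : X ≃ ZMod (p+1) := Fintype.equivFinOfCardEq hp
  let eY : Y ≃ ZMod (q+1) := Fintype.equivFinOfCardEq hq
  obtain ⟨R, fR, nR, M, fM, nM, S, Dec0, hCore⟩ := psm_core (p+1) (q+1) k hk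
  set F : (Fin k → ZMod (p+1)) → ZMod (q+1) :=
    fun v => eY (f (fun i => eX.symm (v i))) with hF
  obtain ⟨Enc0, hdec, hinj, hrange⟩ := hCore F
  refine ⟨R, fR, nR, M, fM, fun i x r => Enc0 i (eX x) r, fun w => eY.symm (Dec0 w),
    ?_, ?_⟩
  · intro x r
    beta_reduce
    rw [hdec (fun i => eX (x i)) r]
    simp [hF]
  · haveI : Nonempty (Fin k → M) := ⟨fun _ => Classical.arbitrary M⟩
    refine ⟨fun y => if h : ((S (eY y)).toFinite.toFinset).Nonempty then
      PMF.uniformOfFinset _ h else PMF.pure (Classical.arbitrary _), fun x => ?_⟩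
    have hr : Set.range (fun r => fun i => Enc0 i (eX (x i)) r)
        = S (F (fun i => eX (x i))) := hrange (fun i => eX (x i))
    have hFx : F (fun i => eX (x i)) = eY (f x) := by simp [hF]
    rw [hFx] at hr
    have hne : ((S (eY (f x))).toFinite.toFinset).Nonempty :=
      ⟨(fun i => Enc0 i (eX (x i)) (Classical.arbitrary R)), by
        rw [Set.Finite.mem_toFinset, ← hr]; exact Set.mem_range_self _⟩
    beta_reduce
    rw [dif_pos hne]
    exact psm_map_uniform_of_inj _ (hinj _) _
      (by rw [Set.Finite.coe_toFinset]; exact hr) hne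
end
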